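/- arXiv:2310.04042 — 2 statements merged into one kernel-verified Lean document; each statement's English description precedes it below -/
import Mathlib

section
/- Let n be an even positive integer and let p ∈ [0,1]^n be the frequency vector of a univariate probabilistic model, i.e., a random bit string x ∈ {0,1}^n is sampled by independently setting x_i = 1 with probability p_i for each i. Let E be the event that x is an optimum of EqualBlocksOneMax, and let z ∈ {0,1}^n be the rounded frequency vector defined by z_i = 1 if p_i ≥ 1/2 and z_i = 0 otherwise. Assume there exists k > 0 such that Pr[E] ≥ n^{-k}. Then for every γ ≥ 4k, the Hamming distance H(x,z) between x and z satisfies Pr[H(x,z) ≥ γ · ln(n)] ≤ n^{-γ/6}. -/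
/-!
STATEMENT 0: If a univariate model `p` on bit strings of even length `n = 2 * m`
samples an optimum of EqualBlocksOneMax with probability at least `n ^ (-k)`,
then for every `γ ≥ 4k`, the probability that a sample has Hamming distance at
least `γ * ln n` from the rounded frequency vector `z` is at most `n ^ (-γ/6)`.
-/

/-- The probability that the univariate model with frequency vector `p` samples
exactly the bit string `x` (bits are independent, bit `i` is `true` with
probability `p i`). -/
noncomputable def univMass {n : ℕ} (p : Fin n → ℝ) (x : Fin n → Bool) : ℝ :=
  ∏ i, if x i then p i else 1 - p i

open scoped Classical in
/-- The probability that a sample from the univariate model with frequency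
vector `p` satisfies the predicate `A`. -/
noncomputable def univPr {n : ℕ} (p : Fin n → ℝ) (A : (Fin n → Bool) → Prop) : ℝ :=
  ∑ x : Fin n → Bool, if A x then univMass p x else 0

/-- `x` is an optimum of EqualBlocksOneMax on bit strings of length `2 * m`:
every block (pair of positions `2j` and `2j+1`, zero-based) has two equal bits. -/
def IsEBOMOptimum (m : ℕ) (x : Fin (2 * m) → Bool) : Prop :=
  ∀ j : Fin m,
    x ⟨2 * j.1, by have := j.2; omega⟩ = x ⟨2 * j.1 + 1, by have := j.2; omega⟩

/-!
Write `q i = min (p i) (1 - p i)`, the probability that bit `i` disagrees with `z i`, and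
`S = ∑ i, q i`. Blocks are independent and block `(a, b)` has equal bits with probability at most
`(1 - q a / 2) * (1 - q b / 2)`, so `Pr[E] ≤ exp (-S / 2)` and the hypothesis gives
`S ≤ 2 k ln n`. Markov's inequality for `2 ^ H(x, z)`, a product of independent factors, gives
`Pr[H ≥ t] ≤ 2 ^ (-t) * ∏ i, (1 + q i) ≤ 2 ^ (-t) * exp S`; for `t = γ ln n` this is at most
`n ^ (-γ / 6)` because `S ≤ (γ / 2) ln n` and `ln 2 > 2 / 3`.
-/

open Finset Real

section UnivariateModel

variable {n : ℕ} {p : Fin n → ℝ}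

lemma univMass_nonneg (hp : ∀ i, p i ∈ Set.Icc (0 : ℝ) 1) (x : Fin n → Bool) :
    0 ≤ univMass p x :=
  prod_nonneg fun i _ => by cases x i <;> simp [(hp i).1, (hp i).2]

lemma sum_univMass_mul_prod (p : Fin n → ℝ) (f : Fin n → Bool → ℝ) :
    ∑ x, univMass p x * ∏ i, f i (x i) = ∏ i, (p i * f i true + (1 - p i) * f i false) := by
  simp only [univMass, ← prod_mul_distrib]
  rw [← Fintype.prod_sum fun i b => (if b then p i else 1 - p i) * f i b]
  simp

lemma univPr_le_sum_univMass_mul (hp : ∀ i, p i ∈ Set.Icc (0 : ℝ) 1)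
    {A : (Fin n → Bool) → Prop} {f : (Fin n → Bool) → ℝ}
    (hf : ∀ x, 0 ≤ f x) (hfA : ∀ x, A x → 1 ≤ f x) :
    univPr p A ≤ ∑ x, univMass p x * f x := by
  refine sum_le_sum fun x _ => ?_
  split_ifs with hx
  · exact le_mul_of_one_le_right (univMass_nonneg hp x) (hfA x hx)
  · exact mul_nonneg (univMass_nonneg hp x) (hf x)

lemma pow_hammingDist_eq_prod {ι α M : Type*} [Fintype ι] [DecidableEq α] [CommMonoid M]
    (a : M) (x z : ι → α) : a ^ hammingDist x z = ∏ i, if x i = z i then 1 else a := by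
  rw [prod_ite, prod_const_one, one_mul, prod_const]
  rfl

lemma univPr_le_hammingDist_le (hp : ∀ i, p i ∈ Set.Icc (0 : ℝ) 1)
    (z : Fin n → Bool) (t : ℝ) :
    univPr p (fun x => t ≤ hammingDist x z)
      ≤ 2 ^ (-t) * exp (∑ i, if z i then 1 - p i else p i) := by
  have hMarkov : univPr p (fun x => t ≤ hammingDist x z)
      ≤ ∑ x, univMass p x * ((2 : ℝ) ^ (-t) * ∏ i, if x i = z i then 1 else 2) := by
    refine univPr_le_sum_univMass_mul hp (fun x => by positivity) fun x hx => ?_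
    rw [← pow_hammingDist_eq_prod, ← rpow_natCast, ← rpow_add two_pos]
    exact one_le_rpow one_le_two (by linarith)
  calc univPr p (fun x => t ≤ hammingDist x z)
      ≤ 2 ^ (-t) * ∑ x, univMass p x * ∏ i, if x i = z i then 1 else (2 : ℝ) := by
        simpa only [mul_left_comm _ ((2 : ℝ) ^ (-t)), ← mul_sum] using hMarkov
    _ = 2 ^ (-t) * ∏ i, (1 + if z i then 1 - p i else p i) := by
        rw [sum_univMass_mul_prod p fun i b => if b = z i then 1 else 2]
        congr 1
        refine prod_congr rfl fun i _ => ?_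
        cases z i <;> simp <;> ring
    _ ≤ 2 ^ (-t) * exp (∑ i, if z i then 1 - p i else p i) := by
        gcongr
        refine prod_one_add_le_exp_sum _ fun i => ?_
        cases z i <;> simp [(hp i).1, (hp i).2]

end UnivariateModel

lemma ite_eq_min_of_iff {a : ℝ} {b : Bool} (h : b = true ↔ 1 / 2 ≤ a) :
    (if b then 1 - a else a) = min a (1 - a) := by
  cases b
  · simp only [Bool.false_eq_true, false_iff, not_le] at h
    simp [min_eq_left (by linarith : a ≤ 1 - a)]
  · simp only [true_iff] at h
    simp [min_eq_right (by linarith : 1 - a ≤ a)]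

lemma agree_le_mul_one_sub_min {a b : ℝ} (ha : a ∈ Set.Icc (0 : ℝ) 1)
    (hb : b ∈ Set.Icc (0 : ℝ) 1) :
    a * b + (1 - a) * (1 - b) ≤ (1 - min a (1 - a) / 2) * (1 - min b (1 - b) / 2) := by
  obtain ⟨ha0, ha1⟩ := ha
  obtain ⟨hb0, hb1⟩ := hb
  rcases le_total a (1 - a) with h | h <;> rcases le_total b (1 - b) with h' | h' <;>
    simp only [min_eq_left, min_eq_right, h, h'] <;>
    nlinarith [mul_nonneg ha0 hb0, mul_nonneg (sub_nonneg.2 ha1) (sub_nonneg.2 hb1),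
      mul_nonneg (sub_nonneg.2 h) (sub_nonneg.2 h'), mul_nonneg ha0 (sub_nonneg.2 hb1),
      mul_nonneg hb0 (sub_nonneg.2 ha1)]

section Blocks

variable {m : ℕ}

/-- Position `b` of block `j` is `2 * j + b`. -/
def blockPos (m : ℕ) : Fin m × Fin 2 ≃ Fin (2 * m) :=
  finProdFinEquiv.trans (finCongr (mul_comm m 2))

lemma prod_eq_prod_blockPos {M : Type*} [CommMonoid M] (f : Fin (2 * m) → M) :
    ∏ i, f i = ∏ j, f (blockPos m (j, 0)) * f (blockPos m (j, 1)) := by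
  rw [← (blockPos m).prod_comp, Fintype.prod_prod_type]
  simp [Fin.prod_univ_two]

lemma sum_prod_blocks {α R : Type*} [Fintype α] [CommSemiring R] (h : Fin m → α → α → R) :
    ∑ x : Fin (2 * m) → α, ∏ j, h j (x (blockPos m (j, 0))) (x (blockPos m (j, 1)))
      = ∏ j, ∑ u, ∑ v, h j u v := by
  let split : (Fin (2 * m) → α) ≃ (Fin m → Fin 2 → α) :=
    ((blockPos m).arrowCongr (Equiv.refl α)).symm.trans (Equiv.curry _ _ _)
  rw [Fintype.sum_equiv split
      (fun x => ∏ j, h j (x (blockPos m (j, 0))) (x (blockPos m (j, 1))))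
      (fun y => ∏ j, h j (y j 0) (y j 1)) fun x => rfl,
    ← Fintype.prod_sum fun j (c : Fin 2 → α) => h j (c 0) (c 1)]
  refine prod_congr rfl fun j _ => ?_
  rw [← (finTwoArrowEquiv α).symm.sum_comp, Fintype.sum_prod_type]
  rfl

lemma isEBOMOptimum_iff (x : Fin (2 * m) → Bool) :
    IsEBOMOptimum m x ↔ ∀ j, x (blockPos m (j, 0)) = x (blockPos m (j, 1)) := by
  have hpos : ∀ j b, blockPos m (j, b) = ⟨2 * j.1 + b.1, by omega⟩ := fun j b => by
    ext; simp [blockPos, finProdFinEquiv]; ring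
  simp [IsEBOMOptimum, hpos]

lemma univPr_isEBOMOptimum (p : Fin (2 * m) → ℝ) :
    univPr p (IsEBOMOptimum m) = ∏ j, (p (blockPos m (j, 0)) * p (blockPos m (j, 1))
      + (1 - p (blockPos m (j, 0))) * (1 - p (blockPos m (j, 1)))) := by
  classical
  let w : Fin (2 * m) → Bool → ℝ := fun i u => if u then p i else 1 - p i
  let h : Fin m → Bool → Bool → ℝ := fun j u v =>
    if u = v then w (blockPos m (j, 0)) u * w (blockPos m (j, 1)) v else 0
  have hterm : ∀ x, (if IsEBOMOptimum m x then univMass p x else 0)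
      = ∏ j, h j (x (blockPos m (j, 0))) (x (blockPos m (j, 1))) := fun x => by
    rw [univMass, prod_eq_prod_blockPos, Fintype.prod_ite_zero, isEBOMOptimum_iff]
    by_cases hx : ∀ j, x (blockPos m (j, 0)) = x (blockPos m (j, 1)) <;> simp only [hx] <;> rfl
  rw [univPr, sum_congr rfl fun x _ => hterm x, sum_prod_blocks]
  refine prod_congr rfl fun j _ => ?_
  simp [h, w]

lemma univPr_isEBOMOptimum_le {p : Fin (2 * m) → ℝ} (hp : ∀ i, p i ∈ Set.Icc (0 : ℝ) 1) :
    univPr p (IsEBOMOptimum m) ≤ exp (-(∑ i, min (p i) (1 - p i)) / 2) := by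
  let q : Fin (2 * m) → ℝ := fun i => min (p i) (1 - p i)
  have hq : ∀ i, q i ≤ 1 / 2 := fun i => by
    linarith [min_le_left (p i) (1 - p i), min_le_right (p i) (1 - p i)]
  calc univPr p (IsEBOMOptimum m)
      ≤ ∏ j, (1 - q (blockPos m (j, 0)) / 2) * (1 - q (blockPos m (j, 1)) / 2) := by
        rw [univPr_isEBOMOptimum]
        refine prod_le_prod (fun j _ => ?_) fun j _ => agree_le_mul_one_sub_min (hp _) (hp _)
        have ha := hp (blockPos m (j, 0))
        have hb := hp (blockPos m (j, 1))
        nlinarith [mul_nonneg ha.1 hb.1, mul_nonneg (sub_nonneg.2 ha.2) (sub_nonneg.2 hb.2)]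
    _ = ∏ i, (1 - q i / 2) := (prod_eq_prod_blockPos fun i => 1 - q i / 2).symm
    _ ≤ ∏ i, exp (-q i / 2) := prod_le_prod (fun i _ => by linarith [hq i])
        fun i _ => by linarith [add_one_le_exp (-q i / 2)]
    _ = exp (-(∑ i, q i) / 2) := by
        rw [← exp_sum, ← sum_div, sum_neg_distrib]

end Blocks

theorem univariate_model_concentration
    (m : ℕ) (hm : 0 < m)
    (p : Fin (2 * m) → ℝ) (hp : ∀ i, p i ∈ Set.Icc (0 : ℝ) 1)
    (z : Fin (2 * m) → Bool) (hz : ∀ i, z i = true ↔ (1 : ℝ) / 2 ≤ p i)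
    (k : ℝ) (hk : 0 < k)
    (hE : ((2 * m : ℕ) : ℝ) ^ (-k) ≤ univPr p (IsEBOMOptimum m))
    (γ : ℝ) (hγ : 4 * k ≤ γ) :
    univPr p (fun x => γ * Real.log ((2 * m : ℕ) : ℝ) ≤ (hammingDist x z : ℝ))
      ≤ ((2 * m : ℕ) : ℝ) ^ (-(γ / 6)) := by
  set N : ℝ := ((2 * m : ℕ) : ℝ)
  have hN : 1 < N := Nat.one_lt_cast.2 (by omega)
  set L := log N
  have hL : 0 < L := log_pos hN
  set S := ∑ i, min (p i) (1 - p i)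
  have hS : S ≤ 2 * k * L := by
    have h := hE.trans (univPr_isEBOMOptimum_le hp)
    rw [rpow_def_of_pos (by linarith), exp_le_exp] at h
    linarith
  have hmismatch : ∑ i, (if z i then 1 - p i else p i) = S :=
    sum_congr rfl fun i _ => ite_eq_min_of_iff (hz i)
  calc univPr p (fun x => γ * L ≤ (hammingDist x z : ℝ))
      ≤ 2 ^ (-(γ * L)) * exp S := hmismatch ▸ univPr_le_hammingDist_le hp z (γ * L)
    _ = exp (log 2 * -(γ * L) + S) := by rw [rpow_def_of_pos two_pos, exp_add]
    _ ≤ exp (L * -(γ / 6)) := by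
        have hγL : 0 ≤ γ * L := mul_nonneg (by linarith) hL.le
        rw [exp_le_exp]
        nlinarith [log_two_gt_d9, mul_le_mul_of_nonneg_left log_two_gt_d9.le hγL]
    _ = N ^ (-(γ / 6)) := (rpow_def_of_pos (by linarith) _).symm
end

section
/- Let n be an even positive integer, let p ∈ [0,1]^n, and for each j ∈ [n/2] set q_j = (p_{2j-1} + p_{2j})/2. If x is sampled from the univariate model with frequency vector p, then the probability that x is an optimum of EqualBlocksOneMax is at most exp( − Σ_{j=1}^{n/2} 2 · q_j · (1 − q_j) ). -/
/-- Index equivalence: block `j` with side `b` corresponds to position `2j + b`. -/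
def eIdx (m : ℕ) : Fin m × Bool ≃ Fin (2 * m) where
  toFun x := ⟨2 * x.1.1 + x.2.toNat, by have := x.1.2; cases x.2 <;> simp <;> omega⟩
  invFun i := (⟨i.1 / 2, by have := i.2; omega⟩, i.1 % 2 == 1)
  left_inv := by
    rintro ⟨j, b⟩
    cases b <;> simp [Fin.ext_iff] <;> omega
  right_inv := by
    intro i
    rcases Nat.mod_two_eq_zero_or_one i.1 with h | h <;>
      · apply Fin.ext
        simp [h]
        omega

/-- Reassemble a bit string from its blocks. -/
def blockEquiv (m : ℕ) : (Fin m → Bool × Bool) ≃ (Fin (2 * m) → Bool) where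
  toFun y i := if i.1 % 2 = 0 then (y ⟨i.1 / 2, by have := i.2; omega⟩).1
               else (y ⟨i.1 / 2, by have := i.2; omega⟩).2
  invFun x j := (x ⟨2 * j.1, by have := j.2; omega⟩, x ⟨2 * j.1 + 1, by have := j.2; omega⟩)
  left_inv := by
    intro y; funext j
    have h1 : (2 * j.1) % 2 = 0 := by omega
    have h2 : (2 * j.1) / 2 = j.1 := by omega
    have h3 : ¬ (2 * j.1 + 1) % 2 = 0 := by omega
    have h4 : (2 * j.1 + 1) / 2 = j.1 := by omega
    simp [h1, h2, h3, h4]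
  right_inv := by
    intro x; funext i
    by_cases h : i.1 % 2 = 0 <;> simp [h] <;> congr 1 <;> (rw [Fin.ext_iff]; simp; omega)

lemma blockEquiv_apply₀ {m : ℕ} (y : Fin m → Bool × Bool) (j : Fin m) :
    blockEquiv m y ⟨2 * j.1, by have := j.2; omega⟩ = (y j).1 := by
  have h1 : (2 * j.1) % 2 = 0 := by omega
  have h2 : (2 * j.1) / 2 = j.1 := by omega
  simp [blockEquiv, h1, h2]

lemma blockEquiv_apply₁ {m : ℕ} (y : Fin m → Bool × Bool) (j : Fin m) :
    blockEquiv m y ⟨2 * j.1 + 1, by have := j.2; omega⟩ = (y j).2 := by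
  have h1 : ¬ (2 * j.1 + 1) % 2 = 0 := by omega
  have h2 : (2 * j.1 + 1) / 2 = j.1 := by omega
  simp [blockEquiv, h1, h2]

lemma eIdx_false {m : ℕ} (j : Fin m) :
    eIdx m (j, false) = ⟨2 * j.1, by have := j.2; omega⟩ := by
  apply Fin.ext; simp [eIdx]

lemma eIdx_true {m : ℕ} (j : Fin m) :
    eIdx m (j, true) = ⟨2 * j.1 + 1, by have := j.2; omega⟩ := by
  apply Fin.ext; simp [eIdx]

lemma isOpt_blockEquiv_iff {m : ℕ} (y : Fin m → Bool × Bool) :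
    IsEBOMOptimum m (blockEquiv m y) ↔ ∀ j, (y j).1 = (y j).2 := by
  unfold IsEBOMOptimum
  constructor <;> intro h j <;>
    simpa [blockEquiv_apply₀, blockEquiv_apply₁] using h j

lemma univMass_blockEquiv {m : ℕ} (p : Fin (2 * m) → ℝ) (y : Fin m → Bool × Bool) :
    univMass p (blockEquiv m y) =
      ∏ j : Fin m,
        ((if (y j).1 then p ⟨2 * j.1, by have := j.2; omega⟩
            else 1 - p ⟨2 * j.1, by have := j.2; omega⟩) *
          (if (y j).2 then p ⟨2 * j.1 + 1, by have := j.2; omega⟩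
            else 1 - p ⟨2 * j.1 + 1, by have := j.2; omega⟩)) := by
  unfold univMass
  rw [← Equiv.prod_comp (eIdx m)
    (fun i => if blockEquiv m y i then p i else 1 - p i)]
  rw [Fintype.prod_prod_type]
  refine Finset.prod_congr rfl fun j _ => ?_
  rw [Fintype.prod_bool]
  rw [eIdx_true j, eIdx_false j, blockEquiv_apply₀, blockEquiv_apply₁]
  ring

lemma block_le (a b : ℝ) (ha : a ∈ Set.Icc (0 : ℝ) 1) (hb : b ∈ Set.Icc (0 : ℝ) 1) :
    a * b + (1 - a) * (1 - b) ≤ Real.exp (-(2 * ((a + b) / 2) * (1 - (a + b) / 2))) := by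
  obtain ⟨ha0, ha1⟩ := ha; obtain ⟨hb0, hb1⟩ := hb
  have h1 : a * b + (1 - a) * (1 - b) = (-(a + b - 2 * a * b)) + 1 := by ring
  have h2 : (-(a + b - 2 * a * b)) + 1 ≤ Real.exp (-(a + b - 2 * a * b)) :=
    Real.add_one_le_exp _
  have h3 : Real.exp (-(a + b - 2 * a * b)) ≤
      Real.exp (-(2 * ((a + b) / 2) * (1 - (a + b) / 2))) := by
    apply Real.exp_le_exp.mpr
    nlinarith [sq_nonneg (a - b)]
  linarith

theorem univPr_optimum_le_exp_sum_q
    (m : ℕ) (hm : 0 < m)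
    (p : Fin (2 * m) → ℝ) (hp : ∀ i, p i ∈ Set.Icc (0 : ℝ) 1)
    (q : Fin m → ℝ)
    (hq : ∀ j : Fin m,
      q j = (p ⟨2 * j.1, by have := j.2; omega⟩ + p ⟨2 * j.1 + 1, by have := j.2; omega⟩) / 2) :
    univPr p (IsEBOMOptimum m) ≤ Real.exp (-∑ j : Fin m, 2 * q j * (1 - q j)) := by
  classical
  set P0 : Fin m → ℝ := fun j => p ⟨2 * j.1, by have := j.2; omega⟩ with hP0
  set P1 : Fin m → ℝ := fun j => p ⟨2 * j.1 + 1, by have := j.2; omega⟩ with hP1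
  set h : Fin m → Bool × Bool → ℝ := fun j c =>
    if c.1 = c.2 then
      (if c.1 then P0 j else 1 - P0 j) * (if c.2 then P1 j else 1 - P1 j)
    else 0 with hh
  have key : univPr p (IsEBOMOptimum m) = ∏ j : Fin m, ∑ c : Bool × Bool, h j c := by
    unfold univPr
    rw [← Equiv.sum_comp (blockEquiv m)
      (fun x => if IsEBOMOptimum m x then univMass p x else 0)]
    rw [Finset.prod_univ_sum]
    rw [Fintype.piFinset_univ]
    refine Finset.sum_congr rfl fun y _ => ?_
    by_cases hopt : IsEBOMOptimum m (blockEquiv m y)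
    · rw [if_pos hopt, univMass_blockEquiv]
      refine Finset.prod_congr rfl fun j _ => ?_
      have := (isOpt_blockEquiv_iff y).mp hopt j
      simp [hh, this, hP0, hP1]
    · rw [if_neg hopt]
      obtain ⟨j, hj⟩ := not_forall.mp (fun hall => hopt ((isOpt_blockEquiv_iff y).mpr hall))
      exact (Finset.prod_eq_zero (Finset.mem_univ j) (by simp [hh, hj])).symm
  have hsum : ∀ j : Fin m, ∑ c : Bool × Bool, h j c = P0 j * P1 j + (1 - P0 j) * (1 - P1 j) := by
    intro j
    rw [Fintype.sum_prod_type]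
    simp [hh, Fintype.sum_bool]
  rw [key]
  have hle : ∀ j : Fin m, ∑ c : Bool × Bool, h j c ≤ Real.exp (-(2 * q j * (1 - q j))) := by
    intro j
    rw [hsum j, hq j]
    exact block_le _ _ (hp _) (hp _)
  calc ∏ j : Fin m, ∑ c : Bool × Bool, h j c
      ≤ ∏ j : Fin m, Real.exp (-(2 * q j * (1 - q j))) := by
        refine Finset.prod_le_prod (fun j _ => ?_) (fun j _ => hle j)
        rw [hsum j]
        have h0 := hp (⟨2 * j.1, by have := j.2; omega⟩ : Fin (2 * m))
        have h1 := hp (⟨2 * j.1 + 1, by have := j.2; omega⟩ : Fin (2 * m))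
        obtain ⟨a0, a1⟩ := h0; obtain ⟨b0, b1⟩ := h1
        have c0 : (0:ℝ) ≤ P0 j := a0
        have c1 : P0 j ≤ 1 := a1
        have d0 : (0:ℝ) ≤ P1 j := b0
        have d1 : P1 j ≤ 1 := b1
        have := mul_nonneg c0 d0
        nlinarith
    _ = Real.exp (-∑ j : Fin m, 2 * q j * (1 - q j)) := by
        rw [← Real.exp_sum]
        simp
end
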